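/- The dimension-4 perfect code generation matrix G is unitary: Gᴴ·G = I. -/

import Mathlib

open Matrix Complex Real

/-- `θ₁ = 2cos(4π/15)`, `θ₂ = 2cos(2π/15)`, `θ₃ = 2cos(16π/15)`, `θ₄ = 2cos(8π/15)`. -/
noncomputable def theta4 : Fin 4 → ℝ :=
  ![2 * Real.cos (4 * Real.pi / 15), 2 * Real.cos (2 * Real.pi / 15),
    2 * Real.cos (16 * Real.pi / 15), 2 * Real.cos (8 * Real.pi / 15)]

/-- The dimension-4 perfect code generation matrix. -/
noncomputable def perfectG4 : Matrix (Fin 4) (Fin 4) ℂ :=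
  Matrix.of fun u v =>
    (1 / (Real.sqrt 15 : ℂ)) *
      (![1 + Complex.I * ((theta4 u : ℂ) ^ 2 - 3),
         (theta4 u : ℂ) + Complex.I * ((theta4 u : ℂ) ^ 3 - 3 * (theta4 u : ℂ)),
         ((theta4 u : ℂ) ^ 3 - 3 * (theta4 u : ℂ)) +
           Complex.I * (-1 + 4 * (theta4 u : ℂ) - (theta4 u : ℂ) ^ 3),
         (-1 - 3 * (theta4 u : ℂ) + (theta4 u : ℂ) ^ 2 + (theta4 u : ℂ) ^ 3) + Complex.I] v)

/-! The four `θ_u` are the Galois conjugates of `c = 2cos(2π/15)`. Since `2cos 5y` is a quintic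
in `2cos y` and `2cos(2π/3) = -1`, the positive number `c` is a root of
`(x + 1)(x⁴ - x³ - 4x² + 4x + 1)`, hence of the quartic; doubling the angle (`x ↦ x² - 2`)
expresses the other `θ_u` as cubics in `c`. Reducing modulo the quartic gives the power sums
`∑ θ_u ^ k = 4, 1, 9, 1, 29, -4, 99` for `k ≤ 6`.

Now `√15 • G = V C`, where `V` is the Vandermonde matrix of the `θ_u` and `C` holds the
Gaussian-integer coefficients of the entries as cubics in `θ`. Hence
`Gᴴ G = (1/15) Cᴴ (Vᵀ V) C`, where `Vᵀ V` is the Hankel matrix of the power sums, and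
`Cᴴ (Vᵀ V) C = 15` is a finite computation. -/

lemma two_mul_cos_two_mul (y : ℝ) : 2 * Real.cos (2 * y) = (2 * Real.cos y) ^ 2 - 2 := by
  rw [Real.cos_two_mul]; ring

lemma two_mul_cos_five_mul (y : ℝ) :
    2 * Real.cos (5 * y) =
      (2 * Real.cos y) ^ 5 - 5 * (2 * Real.cos y) ^ 3 + 5 * (2 * Real.cos y) := by
  rw [show 5 * y = 2 * y + 3 * y by ring, Real.cos_add, Real.cos_two_mul, Real.cos_three_mul,
    Real.sin_two_mul, Real.sin_three_mul]
  linear_combination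
    (16 * Real.cos y * Real.sin y ^ 2 - 16 * Real.cos y ^ 3 + 4 * Real.cos y) *
      Real.sin_sq_add_cos_sq y

lemma quartic_two_mul_cos_two_pi_div_fifteen :
    (2 * Real.cos (2 * π / 15)) ^ 4 - (2 * Real.cos (2 * π / 15)) ^ 3
      - 4 * (2 * Real.cos (2 * π / 15)) ^ 2 + 4 * (2 * Real.cos (2 * π / 15)) + 1 = 0 := by
  set c := 2 * Real.cos (2 * π / 15)
  have hquintic : c ^ 5 - 5 * c ^ 3 + 5 * c = -1 := by
    rw [← two_mul_cos_five_mul, show 5 * (2 * π / 15) = π - π / 3 by ring, Real.cos_pi_sub,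
      Real.cos_pi_div_three]
    norm_num
  have hpos : 0 < c :=
    mul_pos two_pos <| Real.cos_pos_of_mem_Ioo ⟨by linarith [pi_pos], by linarith [pi_pos]⟩
  have hfactor : (c + 1) * (c ^ 4 - c ^ 3 - 4 * c ^ 2 + 4 * c + 1) = 0 := by
    linear_combination hquintic
  exact (mul_eq_zero.mp hfactor).resolve_left (by linarith)

lemma exists_theta4_eq_cubic : ∃ c : ℝ, c ^ 4 - c ^ 3 - 4 * c ^ 2 + 4 * c + 1 = 0 ∧
    theta4 = ![c ^ 2 - 2, c, -c ^ 3 - c ^ 2 + 3 * c + 2, c ^ 3 - 4 * c + 1] := by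
  set c := 2 * Real.cos (2 * π / 15)
  have hc : c ^ 4 - c ^ 3 - 4 * c ^ 2 + 4 * c + 1 = 0 := quartic_two_mul_cos_two_pi_div_fifteen
  refine ⟨c, hc, ?_⟩
  have h4 : 2 * Real.cos (4 * π / 15) = c ^ 2 - 2 := by
    rw [← two_mul_cos_two_mul]; ring_nf
  have h8 : 2 * Real.cos (8 * π / 15) = c ^ 3 - 4 * c + 1 := by
    rw [show 8 * π / 15 = 2 * (4 * π / 15) by ring, two_mul_cos_two_mul, h4]
    linear_combination hc
  have h16 : 2 * Real.cos (16 * π / 15) = -c ^ 3 - c ^ 2 + 3 * c + 2 := by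
    rw [show 16 * π / 15 = 2 * (8 * π / 15) by ring, two_mul_cos_two_mul, h8]
    grind
  ext u
  fin_cases u <;> simp [theta4, h4, h8, h16, c]

lemma sum_theta4_pow (k : Fin 7) : ∑ u, theta4 u ^ (k : ℕ) = ![4, 1, 9, 1, 29, -4, 99] k := by
  obtain ⟨c, hc, hθ⟩ := exists_theta4_eq_cubic
  rw [hθ]
  fin_cases k <;> simp [Fin.sum_univ_four] <;> grind

lemma conjTranspose_vandermonde_ofReal_mul {n : ℕ} (v : Fin n → ℝ) :
    (vandermonde (ofReal ∘ v))ᴴ * vandermonde (ofReal ∘ v) =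
      ((vandermonde v)ᵀ * vandermonde v).map ofReal := by
  ext i j
  simp [mul_apply, vandermonde]

lemma conjTranspose_vandermonde_theta4_mul :
    (vandermonde (ofReal ∘ theta4))ᴴ * vandermonde (ofReal ∘ theta4) =
      !![4, 1, 9, 1; 1, 9, 1, 29; 9, 1, 29, -4; 1, 29, -4, 99] := by
  rw [conjTranspose_vandermonde_ofReal_mul]
  ext i j
  rw [map_apply, vandermonde_transpose_mul_vandermonde, sum_theta4_pow ⟨i + j, by omega⟩]
  fin_cases i <;> fin_cases j <;> simp

noncomputable def perfectG4Coeff : Matrix (Fin 4) (Fin 4) ℂ :=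
  !![1 - 3 * I, 0, -I, -1 + I;
     0, 1 - 3 * I, -3 + 4 * I, -3;
     I, 0, 0, 1;
     0, I, 1 - I, 1]

lemma perfectG4_eq_smul_vandermonde_mul :
    perfectG4 = ((√15 : ℝ) : ℂ)⁻¹ • (vandermonde (ofReal ∘ theta4) * perfectG4Coeff) := by
  ext u v
  fin_cases v <;> simp [perfectG4, perfectG4Coeff, mul_apply, Fin.sum_univ_four] <;> ring

lemma perfectG4Coeff_conjTranspose_mul_mul :
    perfectG4Coeffᴴ * !![4, 1, 9, 1; 1, 9, 1, 29; 9, 1, 29, -4; 1, 29, -4, 99] *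
      perfectG4Coeff = (15 : ℂ) • 1 := by
  ext i j
  fin_cases i <;> fin_cases j <;>
    simp [perfectG4Coeff, mul_apply, Fin.sum_univ_four, map_ofNat] <;> grind [I_sq]

/-- The dimension-4 perfect code generation matrix is unitary: `Gᴴ G = I`. -/
theorem stmt13 : perfectG4ᴴ * perfectG4 = 1 := by
  have hscale : star ((√15 : ℝ) : ℂ)⁻¹ * ((√15 : ℝ) : ℂ)⁻¹ * 15 = 1 := by
    rw [star_inv₀, Complex.star_def, conj_ofReal, ← mul_inv, ← ofReal_mul,
      Real.mul_self_sqrt (by norm_num)]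
    norm_num
  rw [perfectG4_eq_smul_vandermonde_mul, conjTranspose_smul, conjTranspose_mul, smul_mul_smul,
    Matrix.mul_assoc, ← Matrix.mul_assoc (vandermonde _)ᴴ, conjTranspose_vandermonde_theta4_mul,
    ← Matrix.mul_assoc, perfectG4Coeff_conjTranspose_mul_mul, smul_smul, hscale, one_smul]
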